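/- Let G be a graph with Δ(G) ≥ 6 and L a list assignment with |L(v)| ≥ Δ(G) + 3. Suppose u is a vertex of degree 3 with exactly two degree-2 neighbors v, w, and the 1-path u–w–x ends at a vertex x with d(x) ≤ Δ(G) − 1. If G − {u, v, w} has a 2-distance L-coloring, then G has one, obtained by coloring u, then v, then w. -/

import Mathlib

open SimpleGraph

/-- Maximum average degree: the supremum over all nonempty subgraphs `H` of `2|E(H)|/|V(H)|`. -/
noncomputable def mad {V : Type} [Fintype V] (G : SimpleGraph V) : ℝ :=
  sSup {x : ℝ | ∃ H : G.Subgraph, H.verts.Nonempty ∧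
    x = 2 * H.edgeSet.ncard / H.verts.ncard}

/-- Two distinct vertices are at distance at most 2. -/
def TwoDistAdj {V : Type} (G : SimpleGraph V) (u v : V) : Prop :=
  u ≠ v ∧ (G.Adj u v ∨ ∃ w, G.Adj u w ∧ G.Adj w v)

/-- `φ` is a 2-distance coloring of `G` from the lists `L`: each vertex gets a color from
its list and vertices at distance at most 2 get distinct colors. -/
def IsTwoDistListColoring {V : Type} (G : SimpleGraph V) (L : V → Finset ℕ) (φ : V → ℕ) :
    Prop :=
  (∀ v, φ v ∈ L v) ∧ ∀ u v, TwoDistAdj G u v → φ u ≠ φ v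

/-!
Color `u`, `v`, `w` greedily in this order. A vertex `y` has at most `∑_{m ∼ y} d(m)`
vertices at distance at most 2, and when `y` is colored the vertices among them that are
still uncolored do not count. This leaves at most `Δ + 2` forbidden colors each time:
`(2 + 2 + Δ) - 2` for `u` (not counting `v`, `w`), `(3 + Δ) - 1` for `v` (not counting `w`),
and `3 + d(x) ≤ Δ + 2` for `w`. The coloring of `G - {u, v, w}` is already a valid partial
coloring of `G`, since each of `u`, `v`, `w` has at most one neighbor outside `{u, v, w}`.
-/

open Finset

namespace SimpleGraph

variable {V : Type} {G : SimpleGraph V}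

theorem TwoDistAdj.symm {a b : V} (h : TwoDistAdj G a b) : TwoDistAdj G b a := by
  obtain ⟨hne, hab | ⟨m, ham, hmb⟩⟩ := h
  · exact ⟨hne.symm, Or.inl hab.symm⟩
  · exact ⟨hne.symm, Or.inr ⟨m, hmb.symm, ham.symm⟩⟩

section Counting

variable [Fintype V]

noncomputable def twoDistFinset (G : SimpleGraph V) (y : V) : Finset V := by
  classical exact univ.filter (TwoDistAdj G y)

@[simp]
theorem mem_twoDistFinset {y z : V} : z ∈ twoDistFinset G y ↔ TwoDistAdj G y z := by
  simp [twoDistFinset]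

variable [DecidableRel G.Adj]

theorem card_twoDistFinset_le_sum_degree (y : V) :
    #(twoDistFinset G y) ≤ ∑ m ∈ G.neighborFinset y, G.degree m := by
  classical
  have hcover : twoDistFinset G y ⊆
      (G.neighborFinset y).biUnion fun m => insert m ((G.neighborFinset m).erase y) := by
    intro z hz
    obtain ⟨hne, hyz | ⟨m, hym, hmz⟩⟩ := mem_twoDistFinset.mp hz
    · exact mem_biUnion.mpr ⟨z, by simpa using hyz, mem_insert_self _ _⟩
    · exact mem_biUnion.mpr ⟨m, by simpa using hym, by simp [hmz, hne.symm]⟩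
  calc #(twoDistFinset G y)
      ≤ ∑ m ∈ G.neighborFinset y, #(insert m ((G.neighborFinset m).erase y)) :=
        (card_le_card hcover).trans card_biUnion_le
    _ ≤ ∑ m ∈ G.neighborFinset y, G.degree m := by
        refine sum_le_sum fun m hm => (card_insert_le _ _).trans ?_
        have hym : y ∈ G.neighborFinset m := by simpa [adj_comm] using hm
        rw [card_erase_of_mem hym, card_neighborFinset_eq_degree]
        have := G.degree_pos_iff_exists_adj m |>.mpr ⟨y, (G.mem_neighborFinset m y).mp hym⟩
        omega

theorem card_twoDistFinset_le [DecidableEq V] {y : V} {T : Finset V}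
    (hT : T ⊆ G.neighborFinset y) :
    #(twoDistFinset G y) ≤ ∑ m ∈ T, G.degree m + (G.degree y - #T) * G.maxDegree := by
  calc #(twoDistFinset G y)
      ≤ ∑ m ∈ G.neighborFinset y \ T, G.degree m + ∑ m ∈ T, G.degree m := by
        rw [sum_sdiff hT]; exact card_twoDistFinset_le_sum_degree y
    _ ≤ #(G.neighborFinset y \ T) * G.maxDegree + ∑ m ∈ T, G.degree m := by
        gcongr
        exact sum_le_card_nsmul _ _ _ fun m _ => G.degree_le_maxDegree m
    _ = ∑ m ∈ T, G.degree m + (G.degree y - #T) * G.maxDegree := by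
        rw [card_sdiff_of_subset hT, card_neighborFinset_eq_degree, add_comm]

end Counting

theorem eq_of_adj_of_card_neighborFinset_sdiff_le_one [Fintype V] [DecidableRel G.Adj]
    [DecidableEq V] {m a b : V} {T : Finset V} (h : #(G.neighborFinset m \ T) ≤ 1)
    (ha : G.Adj m a) (hb : G.Adj m b) (haT : a ∉ T) (hbT : b ∉ T) : a = b :=
  card_le_one.mp h a (by simp [ha, haT]) b (by simp [hb, hbT])

def IsTwoDistListColoringOn (G : SimpleGraph V) (L : V → Finset ℕ) (S : Set V) (φ : V → ℕ) :
    Prop :=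
  (∀ y ∈ S, φ y ∈ L y) ∧ ∀ a ∈ S, ∀ b ∈ S, TwoDistAdj G a b → φ a ≠ φ b

variable {L : V → Finset ℕ}

theorem isTwoDistListColoringOn_univ {φ : V → ℕ} :
    IsTwoDistListColoringOn G L Set.univ φ ↔ IsTwoDistListColoring G L φ := by
  simp [IsTwoDistListColoringOn, IsTwoDistListColoring]

theorem IsTwoDistListColoringOn.exists_update [DecidableEq V] {S : Set V} {φ : V → ℕ}
    (hφ : IsTwoDistListColoringOn G L S φ) (y : V) (F : Finset V)
    (hF : ∀ z ∈ S, TwoDistAdj G y z → z ∈ F) (hcard : #F < #(L y)) :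
    ∃ c, IsTwoDistListColoringOn G L (insert y S) (Function.update φ y c) := by
  obtain ⟨c, hc⟩ : (L y \ F.image φ).Nonempty := by
    rw [sdiff_nonempty]
    exact fun h => (card_le_card h).trans card_image_le |>.not_gt hcard
  obtain ⟨hcL, hcF⟩ := mem_sdiff.mp hc
  have hfresh : ∀ z ∈ S, TwoDistAdj G y z → c ≠ φ z := fun z hz hyz hc =>
    hcF (mem_image.mpr ⟨z, hF z hz hyz, hc.symm⟩)
  refine ⟨c, fun z hz => ?_, fun a ha b hb hab => ?_⟩
  · rcases eq_or_ne z y with rfl | hzy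
    · simpa using hcL
    · simpa [hzy] using hφ.1 z (hz.resolve_left hzy)
  · have hne := hab.1
    rcases eq_or_ne a y with rfl | hay
    · simpa [hne.symm] using hfresh b (hb.resolve_left hne.symm) hab
    rcases eq_or_ne b y with rfl | hby
    · simpa [hay] using (hfresh a (ha.resolve_left hay) hab.symm).symm
    simpa [hay, hby] using hφ.2 a (ha.resolve_left hay) b (hb.resolve_left hby) hab

theorem exists_isTwoDistListColoringOn_of_induce {S : Set V} {φ : S → ℕ}
    (hS : ∀ m ∉ S, ∀ a ∈ S, ∀ b ∈ S, G.Adj m a → G.Adj m b → a = b)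
    (hφ : IsTwoDistListColoring (G.induce S) (fun y => L y.1) φ) :
    ∃ ψ, IsTwoDistListColoringOn G L S ψ := by
  classical
  refine ⟨fun y => if h : y ∈ S then φ ⟨y, h⟩ else 0, fun y hy => by simpa [hy] using hφ.1 ⟨y, hy⟩,
    fun a ha b hb ⟨hne, hab⟩ => ?_⟩
  simp only [ha, hb, dite_true]
  have hne' : (⟨a, ha⟩ : S) ≠ ⟨b, hb⟩ := fun h => hne (congrArg Subtype.val h)
  rcases hab with hab | ⟨m, ham, hmb⟩
  · exact hφ.2 _ _ ⟨hne', Or.inl hab⟩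
  by_cases hm : m ∈ S
  · exact hφ.2 _ _ ⟨hne', Or.inr ⟨⟨m, hm⟩, ham, hmb⟩⟩
  · exact absurd (hS m hm a ha b hb ham.symm hmb) hne

section Configuration

variable [Fintype V] [DecidableRel G.Adj] [DecidableEq V] {u v w x : V}

theorem card_twoDistFinset_sdiff_pair_le (hdu : G.degree u ≤ 3) (huv : G.Adj u v)
    (huw : G.Adj u w) (hvw : v ≠ w) (hdv : G.degree v ≤ 2) (hdw : G.degree w ≤ 2) :
    #(twoDistFinset G u \ {v, w}) ≤ G.maxDegree + 2 := by
  have := card_twoDistFinset_le (G := G) (y := u) (T := {v, w}) (by simp [insert_subset_iff, huv, huw])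
  rw [card_sdiff_of_subset (by simp [insert_subset_iff, TwoDistAdj, huv, huw, huv.ne, huw.ne]),
    card_pair hvw]
  rw [sum_pair hvw, card_pair hvw] at this
  have : (G.degree u - 2) * G.maxDegree ≤ 1 * G.maxDegree := by gcongr; omega
  omega

theorem card_twoDistFinset_sdiff_singleton_le (hdu : G.degree u ≤ 3) (huv : G.Adj u v)
    (huw : G.Adj u w) (hvw : v ≠ w) (hdv : G.degree v ≤ 2) :
    #(twoDistFinset G v \ {w}) ≤ G.maxDegree + 2 := by
  have := card_twoDistFinset_le (G := G) (y := v) (T := {u}) (by simp [huv.symm])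
  rw [card_sdiff_of_subset (by simpa [TwoDistAdj, hvw] using Or.inr ⟨u, huv.symm, huw⟩),
    card_singleton]
  rw [sum_singleton, card_singleton] at this
  have : (G.degree v - 1) * G.maxDegree ≤ 1 * G.maxDegree := by gcongr; omega
  omega

theorem card_twoDistFinset_le_of_degree_le_two (hdu : G.degree u ≤ 3) (huw : G.Adj u w)
    (hdw : G.degree w ≤ 2) (hwx : G.Adj w x) (hxu : x ≠ u)
    (hdx : G.degree x ≤ G.maxDegree - 1) :
    #(twoDistFinset G w) ≤ G.maxDegree + 2 := by
  have := card_twoDistFinset_le (G := G) (y := w) (T := {u, x})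
    (by simp [insert_subset_iff, huw.symm, hwx])
  rw [sum_pair hxu.symm, card_pair hxu.symm, Nat.sub_eq_zero_of_le hdw] at this
  have := G.degree_pos_iff_exists_adj x |>.mpr ⟨w, hwx.symm⟩
  omega

theorem exists_isTwoDistListColoringOn_of_induce_compl (hdu : G.degree u ≤ 3)
    (huv : G.Adj u v) (huw : G.Adj u w) (hvw : v ≠ w) (hdv : G.degree v ≤ 2)
    (hdw : G.degree w ≤ 2) {φ : {y | y ≠ u ∧ y ≠ v ∧ y ≠ w} → ℕ}
    (hφ : IsTwoDistListColoring (G.induce {y | y ≠ u ∧ y ≠ v ∧ y ≠ w}) (fun y => L y.1) φ) :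
    ∃ ψ, IsTwoDistListColoringOn G L {y | y ≠ u ∧ y ≠ v ∧ y ≠ w} ψ := by
  have hNu : #(G.neighborFinset u \ {v, w}) ≤ 1 := by
    rw [card_sdiff_of_subset (by simp [insert_subset_iff, huv, huw]), card_pair hvw,
      card_neighborFinset_eq_degree]
    omega
  have hNv : #(G.neighborFinset v \ {u}) ≤ 1 := by
    rw [card_sdiff_of_subset (by simp [huv.symm]), card_singleton, card_neighborFinset_eq_degree]
    omega
  have hNw : #(G.neighborFinset w \ {u}) ≤ 1 := by
    rw [card_sdiff_of_subset (by simp [huw.symm]), card_singleton, card_neighborFinset_eq_degree]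
    omega
  refine exists_isTwoDistListColoringOn_of_induce (fun m hm a ha b hb hma hmb => ?_) hφ
  simp only [Set.mem_ofPred_eq, not_and_or, not_not] at hm ha hb
  rcases hm with rfl | rfl | rfl
  · exact eq_of_adj_of_card_neighborFinset_sdiff_le_one hNu hma hmb (by simp [ha.2.1, ha.2.2])
      (by simp [hb.2.1, hb.2.2])
  · exact eq_of_adj_of_card_neighborFinset_sdiff_le_one hNv hma hmb (by simp [ha.1])
      (by simp [hb.1])
  · exact eq_of_adj_of_card_neighborFinset_sdiff_le_one hNw hma hmb (by simp [ha.1])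
      (by simp [hb.1])

end Configuration

end SimpleGraph

theorem extend_coloring_110_vertex_general
    {V : Type} [Fintype V] (G : SimpleGraph V) [DecidableRel G.Adj]
    (L : V → Finset ℕ) (hL : ∀ y, G.maxDegree + 3 ≤ (L y).card)
    (u v w x : V) (hdu : G.degree u = 3)
    (huv : G.Adj u v) (huw : G.Adj u w) (hvw : v ≠ w)
    (hdv : G.degree v = 2) (hdw : G.degree w = 2)
    (hwx : G.Adj w x) (hxu : x ≠ u) (hdx : G.degree x ≤ G.maxDegree - 1)
    (hcol : ∃ φ, IsTwoDistListColoring (G.induce {y | y ≠ u ∧ y ≠ v ∧ y ≠ w})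
      (fun y => L y.1) φ) :
    ∃ φ : V → ℕ, IsTwoDistListColoring G L φ := by
  classical
  obtain ⟨φ, hφ⟩ := hcol
  obtain ⟨ψ, h0⟩ := exists_isTwoDistListColoringOn_of_induce_compl hdu.le huv huw hvw hdv.le
    hdw.le hφ
  obtain ⟨cu, h1⟩ := h0.exists_update u _ (fun z hz huz => by simp_all)
    ((card_twoDistFinset_sdiff_pair_le hdu.le huv huw hvw hdv.le hdw.le).trans_lt
      (by linarith [hL u]))
  obtain ⟨cv, h2⟩ := h1.exists_update v _ (fun z hz hvz => by
      rcases hz with rfl | hz <;> simp_all [huw.ne])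
    ((card_twoDistFinset_sdiff_singleton_le hdu.le huv huw hvw hdv.le).trans_lt
      (by linarith [hL v]))
  obtain ⟨cw, h3⟩ := h2.exists_update w _ (fun z _ hwz => mem_twoDistFinset.mpr hwz)
    ((card_twoDistFinset_le_of_degree_le_two hdu.le huw hdw.le hwx hxu hdx).trans_lt
      (by linarith [hL w]))
  have huniv : insert w (insert v (insert u {y | y ≠ u ∧ y ≠ v ∧ y ≠ w})) = Set.univ := by
    ext y
    simp only [Set.mem_univ, Set.mem_insert_iff, Set.mem_ofPred_eq, iff_true]
    tauto
  exact ⟨_, isTwoDistListColoringOn_univ.mp (huniv ▸ h3)⟩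

/-- If `Δ(G) ≥ 6`, lists have size at least `Δ(G) + 3`, `u` is a 3-vertex with exactly
two degree-2 neighbors `v, w`, and the 1-path `u–w–x` ends at `x` with
`d(x) ≤ Δ(G) − 1`, then any 2-distance list coloring of `G − {u, v, w}` extends to `G`. -/
theorem extend_coloring_110_vertex
    {V : Type} [Fintype V] [DecidableEq V] (G : SimpleGraph V) [DecidableRel G.Adj]
    (hΔ : 6 ≤ G.maxDegree)
    (L : V → Finset ℕ) (hL : ∀ y, G.maxDegree + 3 ≤ (L y).card)
    (u v w x : V) (hdu : G.degree u = 3)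
    (huv : G.Adj u v) (huw : G.Adj u w) (hvw : v ≠ w)
    (hdv : G.degree v = 2) (hdw : G.degree w = 2)
    (hexact : ((G.neighborFinset u).filter fun y => G.degree y = 2).card = 2)
    (hwx : G.Adj w x) (hxu : x ≠ u) (hdx : G.degree x ≤ G.maxDegree - 1)
    (hcol : ∃ φ, IsTwoDistListColoring (G.induce {y | y ≠ u ∧ y ≠ v ∧ y ≠ w})
      (fun y => L y.1) φ) :
    ∃ φ : V → ℕ, IsTwoDistListColoring G L φ :=
  extend_coloring_110_vertex_general G L hL u v w x hdu huv huw hvw hdv hdw hwx hxu hdx hcol
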